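/- For x ≥ 0, x·Φ(x/√2) + √2·φ(x/√2) ≥ 1/√π, where φ, Φ are the standard normal PDF and CDF. Consequently, for a diagram E with k points and σ = 1, ‖G_E‖₁ ≥ k/√π. -/

import Mathlib

open MeasureTheory Real Filter

noncomputable def phi (t : ℝ) : ℝ := Real.exp (-t^2/2) / Real.sqrt (2*Real.pi)

noncomputable def Phi (x : ℝ) : ℝ := ∫ s in Set.Iic x, phi s

/-!
The map `u ↦ u Φ(u) + φ(u)` has derivative `Φ ≥ 0` (as `φ' = -u φ`), so its value at `x / √2` is at
least its value `φ(0) = 1 / √(2π)` at `0`; multiplying by `√2` gives the first claim.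

For the second, a point `(b, d)` contributes `∫ Φ(t - b) Φ(d - t) dt`, which by monotonicity of `Φ`
is at least `∫ Φ(s) Φ(-s) ds = 1 / √π`. The latter is computed from the explicit primitive
`s Φ(s) Φ(-s) - φ(s) (2Φ(s) - 1) + Φ(√2 s) / √π`, whose last term accounts for
`2 φ(s)² = √2 φ(√2 s) / √π`. The Chernoff-type bound `Φ(x) ≤ exp (-x² / 2)` for `x ≤ 0` controls
the limits of this primitive at `±∞` and gives integrability.
-/

open Set Topology

theorem integral_comp_sub_right_Iic {E : Type*} [NormedAddCommGroup E] [NormedSpace ℝ E]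
    (f : ℝ → E) (c d : ℝ) : ∫ x in Iic c, f (x - d) = ∫ x in Iic (c - d), f x := by
  have h := (measurePreserving_sub_right volume d).setIntegral_preimage_emb
    (Homeomorph.subRight d).isClosedEmbedding.measurableEmbedding f (Iic (c - d))
  simpa only [preimage_sub_const_Iic, sub_add_cancel] using h

theorem integrable_multiset_sum_map {α ι G : Type*} [MeasurableSpace α] {μ : Measure α}
    [NormedAddCommGroup G] (E : Multiset ι) (f : ι → α → G)
    (hf : ∀ i ∈ E, Integrable (f i) μ) : Integrable (fun a => (E.map fun i => f i a).sum) μ := by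
  induction E using Multiset.induction_on with
  | empty => simp
  | cons i E ih =>
    simp only [Multiset.map_cons, Multiset.sum_cons]
    exact (hf i (Multiset.mem_cons_self i E)).add
      (ih fun j hj => hf j (Multiset.mem_cons_of_mem hj))

theorem integral_multiset_sum_map {α ι G : Type*} [MeasurableSpace α] {μ : Measure α}
    [NormedAddCommGroup G] [NormedSpace ℝ G] (E : Multiset ι) (f : ι → α → G)
    (hf : ∀ i ∈ E, Integrable (f i) μ) :
    ∫ a, (E.map fun i => f i a).sum ∂μ = (E.map fun i => ∫ a, f i a ∂μ).sum := by
  induction E using Multiset.induction_on with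
  | empty => simp
  | cons i E ih =>
    have hE : ∀ j ∈ E, Integrable (f j) μ := fun j hj => hf j (Multiset.mem_cons_of_mem hj)
    simp only [Multiset.map_cons, Multiset.sum_cons]
    rw [integral_add (hf i (Multiset.mem_cons_self i E)) (integrable_multiset_sum_map E f hE),
      ih hE]

theorem phi_pos (t : ℝ) : 0 < phi t := by
  unfold phi; positivity

theorem phi_neg (t : ℝ) : phi (-t) = phi t := by
  simp only [phi, neg_sq]

theorem continuous_phi : Continuous phi := by
  unfold phi; fun_prop

theorem phi_eq_exp_neg_mul_sq (t : ℝ) : phi t = exp (-(1 / 2) * t ^ 2) / √(2 * π) := by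
  unfold phi; ring_nf

theorem integrable_phi : Integrable phi := by
  rw [funext phi_eq_exp_neg_mul_sq]
  exact (integrable_exp_neg_mul_sq (by norm_num)).div_const _

theorem integral_phi : ∫ t, phi t = 1 := by
  simp only [phi_eq_exp_neg_mul_sq, integral_div, integral_gaussian]
  rw [show π / (1 / 2) = 2 * π by ring, div_self (by positivity)]

theorem hasDerivAt_phi (t : ℝ) : HasDerivAt phi (-t * phi t) t := by
  have h : HasDerivAt (fun x : ℝ => -x ^ 2 / 2) (-t) t :=
    ((hasDerivAt_pow 2 t).neg.div_const 2).congr_deriv (by push_cast; ring)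
  exact (h.exp.div_const (√(2 * π))).congr_deriv (by unfold phi; ring)

theorem phi_sqrt_two_mul (t : ℝ) : phi (√2 * t) = √(2 * π) * phi t ^ 2 := by
  have hexp : exp (-(√2 * t) ^ 2 / 2) = exp (-t ^ 2 / 2) ^ 2 := by
    rw [← exp_nat_mul, mul_pow, sq_sqrt zero_le_two]; ring_nf
  simp only [phi, hexp]
  field_simp

theorem tendsto_exp_neg_sq_div_two_cocompact :
    Tendsto (fun x : ℝ => exp (-x ^ 2 / 2)) (cocompact ℝ) (𝓝 0) := by
  refine (tendsto_rpow_abs_mul_exp_neg_mul_sq_cocompact (a := 1 / 2) (by norm_num) 0).congr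
    fun x => ?_
  rw [rpow_zero, one_mul]; ring_nf

theorem tendsto_phi_cocompact : Tendsto phi (cocompact ℝ) (𝓝 0) := by
  have h := tendsto_exp_neg_sq_div_two_cocompact.div_const (√(2 * π))
  rwa [zero_div] at h

theorem tendsto_mul_exp_neg_sq_div_two_atTop :
    Tendsto (fun u : ℝ => u * exp (-u ^ 2 / 2)) atTop (𝓝 0) := by
  refine ((tendsto_rpow_abs_mul_exp_neg_mul_sq_cocompact (a := 1 / 2) (by norm_num) 1).mono_left
    atTop_le_cocompact).congr' ?_
  filter_upwards [eventually_ge_atTop 0] with u hu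
  rw [rpow_one, abs_of_nonneg hu]; ring_nf

theorem Phi_nonneg (x : ℝ) : 0 ≤ Phi x :=
  setIntegral_nonneg measurableSet_Iic fun s _ => (phi_pos s).le

theorem Phi_le_one (x : ℝ) : Phi x ≤ 1 :=
  integral_phi ▸ setIntegral_le_integral integrable_phi (.of_forall fun s => (phi_pos s).le)

theorem monotone_Phi : Monotone Phi := fun _ _ h =>
  setIntegral_mono_set integrable_phi.integrableOn (.of_forall fun s => (phi_pos s).le)
    (Iic_subset_Iic.mpr h).eventuallyLE

theorem hasDerivAt_Phi (x : ℝ) : HasDerivAt Phi (phi x) x := by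
  have hPhi : Phi = fun y => Phi 0 + ∫ s in (0 : ℝ)..y, phi s := by
    ext y
    rw [← intervalIntegral.integral_Iic_sub_Iic integrable_phi.integrableOn
      integrable_phi.integrableOn, Phi, Phi, add_sub_cancel]
  rw [hPhi]
  exact (continuous_phi.integral_hasStrictDerivAt 0 x).hasDerivAt.const_add _

@[fun_prop]
theorem continuous_Phi : Continuous Phi :=
  continuous_iff_continuousAt.mpr fun x => (hasDerivAt_Phi x).continuousAt

theorem Phi_neg (x : ℝ) : Phi (-x) = 1 - Phi x := by
  have hIoi : Phi (-x) = ∫ s in Ioi x, phi s := by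
    simp only [Phi, ← integral_comp_neg_Ioi, phi_neg]
  rw [hIoi, ← integral_phi, ← intervalIntegral.integral_Iic_add_Ioi (b := x)
    integrable_phi.integrableOn integrable_phi.integrableOn, Phi, add_sub_cancel_left]

theorem Phi_le_exp_neg_sq_div_two {x : ℝ} (hx : x ≤ 0) : Phi x ≤ exp (-x ^ 2 / 2) := by
  have hpointwise : ∀ s ∈ Iic x, phi s ≤ exp (-x ^ 2 / 2) * phi (s - x) := by
    intro s hs
    -- `s² - x² - (s - x)² = 2x (s - x) ≥ 0`
    rw [phi, phi, ← mul_div_assoc, ← exp_add]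
    gcongr
    nlinarith [mem_Iic.mp hs]
  calc Phi x ≤ ∫ s in Iic x, exp (-x ^ 2 / 2) * phi (s - x) :=
        setIntegral_mono_on integrable_phi.integrableOn
          ((integrable_phi.comp_sub_right x).const_mul _).integrableOn measurableSet_Iic hpointwise
    _ = exp (-x ^ 2 / 2) * Phi 0 := by
        rw [integral_const_mul, integral_comp_sub_right_Iic, sub_self, Phi]
    _ ≤ exp (-x ^ 2 / 2) := mul_le_of_le_one_right (exp_nonneg _) (Phi_le_one 0)

theorem tendsto_Phi_atBot : Tendsto Phi atBot (𝓝 0) :=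
  squeeze_zero' (.of_forall Phi_nonneg)
    ((eventually_le_atBot 0).mono fun _ hx => Phi_le_exp_neg_sq_div_two hx)
    (tendsto_exp_neg_sq_div_two_cocompact.mono_left atBot_le_cocompact)

theorem tendsto_Phi_atTop : Tendsto Phi atTop (𝓝 1) := by
  have h := (tendsto_Phi_atBot.comp tendsto_neg_atTop_atBot).const_sub 1
  simpa only [Function.comp_def, Phi_neg, sub_sub_cancel, sub_zero] using h

theorem tendsto_mul_Phi_neg_atTop : Tendsto (fun u => u * Phi (-u)) atTop (𝓝 0) := by
  refine squeeze_zero' ?_ ?_ tendsto_mul_exp_neg_sq_div_two_atTop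
  · filter_upwards [eventually_ge_atTop 0] with u hu
    exact mul_nonneg hu (Phi_nonneg _)
  · filter_upwards [eventually_ge_atTop 0] with u hu
    simpa only [neg_sq] using
      mul_le_mul_of_nonneg_left (Phi_le_exp_neg_sq_div_two (neg_nonpos.mpr hu)) hu

noncomputable def primitivePhi (u : ℝ) : ℝ := u * Phi u + phi u

theorem hasDerivAt_primitivePhi (u : ℝ) : HasDerivAt primitivePhi (Phi u) u :=
  (((hasDerivAt_id u).mul (hasDerivAt_Phi u)).add (hasDerivAt_phi u)).congr_deriv
    (by simp only [id]; ring)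

theorem monotone_primitivePhi : Monotone primitivePhi :=
  monotone_of_hasDerivAt_nonneg hasDerivAt_primitivePhi Phi_nonneg

theorem sqrt_two_mul_phi_zero : √2 * phi 0 = 1 / √π := by
  have hπ : 0 < √π := sqrt_pos.mpr pi_pos
  rw [phi, sqrt_mul zero_le_two]
  field_simp
  norm_num

theorem one_div_sqrt_pi_le_mul_Phi_add_sqrt_two_mul_phi {x : ℝ} (hx : 0 ≤ x) :
    1 / √π ≤ x * Phi (x / √2) + √2 * phi (x / √2) := by
  have hmono := monotone_primitivePhi (div_nonneg hx (sqrt_nonneg 2))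
  calc 1 / √π = √2 * primitivePhi 0 := by simp [primitivePhi, sqrt_two_mul_phi_zero]
    _ ≤ √2 * primitivePhi (x / √2) := by gcongr
    _ = x * Phi (x / √2) + √2 * phi (x / √2) := by
        rw [primitivePhi]; field_simp

noncomputable def primitivePhiMulPhiNeg (s : ℝ) : ℝ :=
  s * Phi s * Phi (-s) - phi s * (2 * Phi s - 1) + Phi (√2 * s) / √π

theorem hasDerivAt_primitivePhiMulPhiNeg (s : ℝ) :
    HasDerivAt primitivePhiMulPhiNeg (Phi s * Phi (-s)) s := by
  have hPhiNeg : HasDerivAt (fun t => Phi (-t)) (-phi s) s :=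
    ((hasDerivAt_Phi (-s)).comp s (hasDerivAt_neg s)).congr_deriv (by rw [phi_neg, mul_neg_one])
  have hPhiSqrt : HasDerivAt (fun t => Phi (√2 * t)) (phi (√2 * s) * √2) s :=
    (hasDerivAt_Phi (√2 * s)).comp s ((hasDerivAt_id s).const_mul √2 |>.congr_deriv (mul_one _))
  have h := ((((hasDerivAt_id s).mul (hasDerivAt_Phi s)).mul hPhiNeg).sub
    ((hasDerivAt_phi s).mul (((hasDerivAt_Phi s).const_mul 2).sub_const 1))).add
    (hPhiSqrt.div_const √π)
  refine h.congr_deriv ?_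
  have hsqrt : √(2 * π) * √2 / √π = 2 := by
    rw [sqrt_mul zero_le_two]
    field_simp
    simp
  rw [phi_sqrt_two_mul, Phi_neg]
  simp only [Pi.mul_apply, id_eq]
  linear_combination phi s ^ 2 * hsqrt

theorem primitivePhiMulPhiNeg_add_neg (s : ℝ) :
    primitivePhiMulPhiNeg s + primitivePhiMulPhiNeg (-s) = 1 / √π := by
  simp only [primitivePhiMulPhiNeg, neg_neg, phi_neg, mul_neg, Phi_neg]
  ring

theorem tendsto_primitivePhiMulPhiNeg_atTop :
    Tendsto primitivePhiMulPhiNeg atTop (𝓝 (1 / √π)) := by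
  have hsqrt : Tendsto (fun s : ℝ => √2 * s) atTop atTop :=
    tendsto_id.const_mul_atTop (by positivity)
  have h := ((tendsto_Phi_atTop.mul tendsto_mul_Phi_neg_atTop).sub
    ((tendsto_phi_cocompact.mono_left atTop_le_cocompact).mul
      ((tendsto_Phi_atTop.const_mul 2).sub_const 1))).add
    ((tendsto_Phi_atTop.comp hsqrt).div_const √π)
  simp only [mul_zero, zero_mul, sub_zero, zero_add] at h
  refine h.congr fun s => ?_
  simp only [primitivePhiMulPhiNeg, Function.comp_apply]
  ring

theorem tendsto_primitivePhiMulPhiNeg_atBot : Tendsto primitivePhiMulPhiNeg atBot (𝓝 0) := by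
  have h := (tendsto_primitivePhiMulPhiNeg_atTop.comp tendsto_neg_atBot_atTop).const_sub (1 / √π)
  rw [sub_self] at h
  refine h.congr fun s => ?_
  simp only [Function.comp_apply, ← primitivePhiMulPhiNeg_add_neg s]
  ring

theorem integrable_exp_neg_sq_div_two_comp_sub (c : ℝ) :
    Integrable fun t : ℝ => exp (-(t - c) ^ 2 / 2) := by
  refine ((integrable_exp_neg_mul_sq (b := 1 / 2) (by norm_num)).comp_sub_right c).congr
    (.of_forall fun t => ?_)
  ring_nf

theorem Phi_sub_mul_Phi_sub_le (b d t : ℝ) :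
    Phi (t - b) * Phi (d - t) ≤
      exp (-(t - b) ^ 2 / 2) + exp (-(t - d) ^ 2 / 2) + (Icc b d).indicator 1 t := by
  have hb := exp_nonneg (-(t - b) ^ 2 / 2)
  have hd := exp_nonneg (-(t - d) ^ 2 / 2)
  have hI : 0 ≤ (Icc b d).indicator (1 : ℝ → ℝ) t := indicator_nonneg (fun _ _ => zero_le_one) t
  rcases le_or_gt t b with htb | hbt
  · have := Phi_le_exp_neg_sq_div_two (sub_nonpos.mpr htb)
    linarith [mul_le_of_le_one_right (Phi_nonneg (t - b)) (Phi_le_one (d - t))]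
  rcases le_or_gt t d with htd | hdt
  · rw [indicator_of_mem (show t ∈ Icc b d from ⟨hbt.le, htd⟩), Pi.one_apply]
    linarith [mul_le_one₀ (Phi_le_one (t - b)) (Phi_nonneg (d - t)) (Phi_le_one (d - t))]
  · have := Phi_le_exp_neg_sq_div_two (sub_nonpos.mpr hdt.le)
    rw [← neg_sq, neg_sub] at this
    linarith [mul_le_of_le_one_left (Phi_nonneg (d - t)) (Phi_le_one (t - b))]

theorem integrable_Phi_sub_mul_Phi_sub (b d : ℝ) :
    Integrable fun t => Phi (t - b) * Phi (d - t) := by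
  have hI : Integrable ((Icc b d).indicator (1 : ℝ → ℝ)) :=
    (integrable_indicator_iff measurableSet_Icc).mpr (integrableOn_const measure_Icc_lt_top.ne)
  refine Integrable.mono' (((integrable_exp_neg_sq_div_two_comp_sub b).add
    (integrable_exp_neg_sq_div_two_comp_sub d)).add hI) (by fun_prop) (.of_forall fun t => ?_)
  rw [norm_of_nonneg (mul_nonneg (Phi_nonneg _) (Phi_nonneg _))]
  exact Phi_sub_mul_Phi_sub_le b d t

theorem integral_Phi_mul_Phi_neg : ∫ s, Phi s * Phi (-s) = 1 / √π := by
  have h := integral_of_hasDerivAt_of_tendsto hasDerivAt_primitivePhiMulPhiNeg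
    (by simpa using integrable_Phi_sub_mul_Phi_sub 0 0)
    tendsto_primitivePhiMulPhiNeg_atBot tendsto_primitivePhiMulPhiNeg_atTop
  rwa [sub_zero] at h

theorem one_div_sqrt_pi_le_integral_Phi_sub_mul_Phi_sub {b d : ℝ} (h : b ≤ d) :
    1 / √π ≤ ∫ t, Phi (t - b) * Phi (d - t) :=
  calc 1 / √π = ∫ t, Phi (t - b) * Phi (-(t - b)) := by
        rw [integral_sub_right_eq_self (fun s => Phi s * Phi (-s)), integral_Phi_mul_Phi_neg]
    _ ≤ ∫ t, Phi (t - b) * Phi (d - t) := by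
        refine integral_mono (by simpa using integrable_Phi_sub_mul_Phi_sub b b)
          (integrable_Phi_sub_mul_Phi_sub b d) fun t => ?_
        exact mul_le_mul_of_nonneg_left (monotone_Phi (by linarith)) (Phi_nonneg _)

theorem stmt12 (E : Multiset (ℝ × ℝ)) (hE : ∀ p ∈ E, p.1 < p.2) :
    (∀ x : ℝ, 0 ≤ x →
      1 / Real.sqrt Real.pi ≤
        x * Phi (x / Real.sqrt 2) + Real.sqrt 2 * phi (x / Real.sqrt 2)) ∧
    (E.card : ℝ) / Real.sqrt Real.pi ≤
      ∫ t : ℝ, |(E.map (fun p => Phi (t - p.1) * Phi (p.2 - t))).sum| := by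
  refine ⟨fun x hx => one_div_sqrt_pi_le_mul_Phi_add_sqrt_two_mul_phi hx, ?_⟩
  have hsum_nonneg (t : ℝ) : 0 ≤ (E.map fun p => Phi (t - p.1) * Phi (p.2 - t)).sum :=
    Multiset.sum_nonneg fun _ hq => by
      obtain ⟨p, -, rfl⟩ := Multiset.mem_map.mp hq
      exact mul_nonneg (Phi_nonneg _) (Phi_nonneg _)
  simp only [abs_of_nonneg (hsum_nonneg _)]
  rw [integral_multiset_sum_map E (fun p t => Phi (t - p.1) * Phi (p.2 - t))
    fun p _ => integrable_Phi_sub_mul_Phi_sub p.1 p.2, div_eq_mul_one_div, ← nsmul_eq_mul,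
    ← Multiset.card_map (fun p => ∫ t, Phi (t - p.1) * Phi (p.2 - t))]
  refine Multiset.card_nsmul_le_sum fun y hy => ?_
  obtain ⟨p, hp, rfl⟩ := Multiset.mem_map.mp hy
  exact one_div_sqrt_pi_le_integral_Phi_sub_mul_Phi_sub (hE p hp).le
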